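/- arXiv:2603.05619 — 4 statements merged into one kernel-verified Lean document; each statement's English description precedes it below -/
import Mathlib

section
/- Let β ∈ (0,1), L a positive integer, and Z = ∑_{t=0}^{L-1} β^t. Then ∑_{t=0}^{L-1} |β^t/Z − 1/L| ≤ 2(1 − β^L). -/
/-- For `β ∈ (0,1)`, `L ≥ 1`, `Z = ∑_{t<L} β^t`, we have
`∑_{t<L} |β^t/Z − 1/L| ≤ 2(1 − β^L)`. -/
theorem discounted_vs_uniform_tv (β : ℝ) (hβ : β ∈ Set.Ioo (0:ℝ) 1) (L : ℕ) (hL : 1 ≤ L) :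
    ∑ t ∈ Finset.range L, |β ^ t / (∑ s ∈ Finset.range L, β ^ s) - 1 / (L : ℝ)|
      ≤ 2 * (1 - β ^ L) := by
  obtain ⟨hβ0, hβ1⟩ := hβ
  set Z := ∑ s ∈ Finset.range L, β ^ s with hZ
  have hZpos : 0 < Z := Finset.sum_pos (fun i _ => pow_pos hβ0 i)
    (Finset.nonempty_range_iff.mpr (by omega))
  have hLpos : (0:ℝ) < L := by exact_mod_cast hL
  have hZL : Z ≤ L := by
    calc Z ≤ ∑ s ∈ Finset.range L, (1:ℝ) :=
          Finset.sum_le_sum fun i _ => pow_le_one₀ hβ0.le hβ1.le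
      _ = L := by simp
  have hsum1 : ∑ t ∈ Finset.range L, β ^ t / Z = 1 := by
    rw [← Finset.sum_div, ← hZ, div_self hZpos.ne']
  have habs : ∀ x : ℝ, |x| = x + 2 * max (-x) 0 := by
    intro x
    rcases le_total 0 x with h | h
    · rw [abs_of_nonneg h, max_eq_right (by linarith)]; ring
    · rw [abs_of_nonpos h, max_eq_left (by linarith)]; ring
  have key : ∑ t ∈ Finset.range L, |β ^ t / Z - 1 / (L:ℝ)|
      = 2 * ∑ t ∈ Finset.range L, max (1 / (L:ℝ) - β ^ t / Z) 0 := by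
    have hpt : ∀ t ∈ Finset.range L, |β ^ t / Z - 1 / (L:ℝ)|
        = (β ^ t / Z - 1 / (L:ℝ)) + 2 * max (1 / (L:ℝ) - β ^ t / Z) 0 := by
      intro t _
      have := habs (β ^ t / Z - 1 / (L:ℝ))
      simpa [neg_sub] using this
    rw [Finset.sum_congr rfl hpt, Finset.sum_add_distrib, ← Finset.mul_sum,
      Finset.sum_sub_distrib, hsum1]
    have : ∑ _t ∈ Finset.range L, 1 / (L:ℝ) = 1 := by
      rw [Finset.sum_const, Finset.card_range, nsmul_eq_mul, mul_one_div,
        div_self hLpos.ne']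
    rw [this]; ring
  have hbound : ∀ t ∈ Finset.range L,
      max (1 / (L:ℝ) - β ^ t / Z) 0 ≤ (1 - β ^ (L - 1)) / L := by
    intro t ht
    have htL : t ≤ L - 1 := by
      have := Finset.mem_range.mp ht; omega
    have ha : β ^ (L - 1) ≤ β ^ t := pow_le_pow_of_le_one hβ0.le hβ1.le htL
    have hb : β ^ (L - 1) / (L:ℝ) ≤ β ^ t / Z :=
      div_le_div₀ (pow_nonneg hβ0.le t) ha hZpos hZL
    refine max_le ?_ (div_nonneg (by
      have := pow_le_one₀ hβ0.le hβ1.le (n := L - 1); linarith) hLpos.le)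
    rw [sub_div]
    linarith
  have hsumb : ∑ t ∈ Finset.range L, max (1 / (L:ℝ) - β ^ t / Z) 0
      ≤ 1 - β ^ (L - 1) := by
    calc ∑ t ∈ Finset.range L, max (1 / (L:ℝ) - β ^ t / Z) 0
        ≤ ∑ _t ∈ Finset.range L, (1 - β ^ (L - 1)) / L := Finset.sum_le_sum hbound
      _ = L * ((1 - β ^ (L - 1)) / L) := by
          rw [Finset.sum_const, Finset.card_range, nsmul_eq_mul]
      _ = 1 - β ^ (L - 1) := by field_simp
  have hfin : β ^ L ≤ β ^ (L - 1) :=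
    pow_le_pow_of_le_one hβ0.le hβ1.le (by omega)
  rw [key]
  linarith
end

section
/- Let β ∈ (0,1), L a positive even integer, and u : Fin L → ℝ with 0 ≤ u(t) ≤ 1 for all t. Then for any permutation σ of Fin L, ∑_{t=0}^{L-1} β^t u(σ(t)) ≤ ∑_{t=0}^{L-1} β^t u(t) + (1 − β^L)^2/(1 − β). -/
open Finset

/-- Sum of `β^j` over a `k`-element subset of `range L` is at most the sum over `range k`. -/
lemma geom_top_bound {β : ℝ} (hβ0 : 0 < β) (hβ1 : β < 1) {L : ℕ}
    (B : Finset ℕ) (hBL : B ⊆ range L) :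
    ∑ j ∈ B, β ^ j ≤ ∑ j ∈ range B.card, β ^ j := by
  set k := B.card with hk
  set I := range k with hI
  have h1 : ∑ j ∈ B \ I, β ^ j ≤ (B \ I).card • β ^ k := by
    apply Finset.sum_le_card_nsmul
    intro x hx
    rw [mem_sdiff, hI, mem_range, not_lt] at hx
    exact pow_le_pow_of_le_one hβ0.le hβ1.le hx.2
  have h2 : (I \ B).card • β ^ k ≤ ∑ j ∈ I \ B, β ^ j := by
    apply Finset.card_nsmul_le_sum
    intro x hx
    rw [mem_sdiff, hI, mem_range] at hx
    exact pow_le_pow_of_le_one hβ0.le hβ1.le hx.1.le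
  have hcard : (B \ I).card = (I \ B).card := by
    have hB := Finset.card_sdiff_add_card_inter B I
    have hIc := Finset.card_sdiff_add_card_inter I B
    rw [Finset.inter_comm] at hIc
    have : I.card = k := by rw [hI, card_range]
    omega
  have e1 : ∑ j ∈ B, β ^ j = ∑ j ∈ B ∩ I, β ^ j + ∑ j ∈ B \ I, β ^ j :=
    (Finset.sum_inter_add_sum_sdiff B I _).symm
  have e2 : ∑ j ∈ I, β ^ j = ∑ j ∈ I ∩ B, β ^ j + ∑ j ∈ I \ B, β ^ j :=
    (Finset.sum_inter_add_sum_sdiff I B _).symm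
  have e3 : B ∩ I = I ∩ B := Finset.inter_comm B I
  rw [e1, e2, e3]
  have : ∑ j ∈ B \ I, β ^ j ≤ ∑ j ∈ I \ B, β ^ j := by
    calc ∑ j ∈ B \ I, β ^ j ≤ (B \ I).card • β ^ k := h1
    _ = (I \ B).card • β ^ k := by rw [hcard]
    _ ≤ ∑ j ∈ I \ B, β ^ j := h2
  linarith

/-- Sum of `β^j` over a `k`-element subset of `range L` is at least the sum over `Ico (L-k) L`. -/
lemma geom_bot_bound {β : ℝ} (hβ0 : 0 < β) (hβ1 : β < 1) {L : ℕ}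
    (B : Finset ℕ) (hBL : B ⊆ range L) :
    ∑ j ∈ Ico (L - B.card) L, β ^ j ≤ ∑ j ∈ B, β ^ j := by
  set k := B.card with hk
  have hkL : k ≤ L := by
    have := Finset.card_le_card hBL
    rwa [card_range] at this
  set J := Ico (L - k) L with hJ
  have hJcard : J.card = k := by
    rw [hJ, Nat.card_Ico]; omega
  have h1 : ∑ j ∈ J \ B, β ^ j ≤ (J \ B).card • β ^ (L - k) := by
    apply Finset.sum_le_card_nsmul
    intro x hx
    rw [mem_sdiff, hJ, mem_Ico] at hx
    exact pow_le_pow_of_le_one hβ0.le hβ1.le hx.1.1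
  have h2 : (B \ J).card • β ^ (L - k) ≤ ∑ j ∈ B \ J, β ^ j := by
    apply Finset.card_nsmul_le_sum
    intro x hx
    rw [mem_sdiff, hJ, mem_Ico, not_and] at hx
    have hxL : x < L := by
      have := hBL hx.1; rwa [mem_range] at this
    have : x ≤ L - k := by
      by_contra h
      exact (hx.2 (by omega)) hxL
    exact pow_le_pow_of_le_one hβ0.le hβ1.le this
  have hcard : (J \ B).card = (B \ J).card := by
    have hB := Finset.card_sdiff_add_card_inter B J
    have hJc := Finset.card_sdiff_add_card_inter J B
    rw [Finset.inter_comm] at hJc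
    omega
  have e1 : ∑ j ∈ B, β ^ j = ∑ j ∈ B ∩ J, β ^ j + ∑ j ∈ B \ J, β ^ j :=
    (Finset.sum_inter_add_sum_sdiff B J _).symm
  have e2 : ∑ j ∈ J, β ^ j = ∑ j ∈ J ∩ B, β ^ j + ∑ j ∈ J \ B, β ^ j :=
    (Finset.sum_inter_add_sum_sdiff J B _).symm
  have e3 : J ∩ B = B ∩ J := Finset.inter_comm J B
  rw [e1, e2, e3]
  have : ∑ j ∈ J \ B, β ^ j ≤ ∑ j ∈ B \ J, β ^ j := by
    calc ∑ j ∈ J \ B, β ^ j ≤ (J \ B).card • β ^ (L - k) := h1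
    _ = (B \ J).card • β ^ (L - k) := by rw [hcard]
    _ ≤ ∑ j ∈ B \ J, β ^ j := h2
  linarith

/-- Reordering payoffs in `[0,1]` within a block of even length `L` increases the
discounted sum by at most `(1 − β^L)²/(1 − β)`. -/
theorem permuted_discounted_sum_le (β : ℝ) (hβ : β ∈ Set.Ioo (0:ℝ) 1)
    (L : ℕ) (hL : 0 < L) (hLeven : Even L)
    (u : Fin L → ℝ) (hu : ∀ t, u t ∈ Set.Icc (0:ℝ) 1) (σ : Equiv.Perm (Fin L)) :
    ∑ t : Fin L, β ^ (t : ℕ) * u (σ t)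
      ≤ ∑ t : Fin L, β ^ (t : ℕ) * u t + (1 - β ^ L) ^ 2 / (1 - β) := by
  obtain ⟨hβ0, hβ1⟩ := hβ
  set τ := σ.symm with hτ
  -- reindex the LHS
  have hre : ∑ t : Fin L, β ^ (t : ℕ) * u (σ t)
      = ∑ s : Fin L, β ^ ((τ s : Fin L) : ℕ) * u s := by
    rw [← Equiv.sum_comp σ (fun s => β ^ ((τ s : Fin L) : ℕ) * u s)]
    simp [hτ]
  rw [hre]
  -- reduce to bounding the difference
  have key : ∑ s : Fin L, (β ^ ((τ s : Fin L) : ℕ) - β ^ (s : ℕ)) * u s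
      ≤ (1 - β ^ L) ^ 2 / (1 - β) := by
    set A : Finset (Fin L) := univ.filter (fun s => 0 ≤ β ^ ((τ s : Fin L) : ℕ) - β ^ (s : ℕ)) with hA
    have step1 : ∑ s : Fin L, (β ^ ((τ s : Fin L) : ℕ) - β ^ (s : ℕ)) * u s
        ≤ ∑ s ∈ A, (β ^ ((τ s : Fin L) : ℕ) - β ^ (s : ℕ)) := by
      rw [← Finset.sum_filter_add_sum_filter_not univ
        (fun s => 0 ≤ β ^ ((τ s : Fin L) : ℕ) - β ^ (s : ℕ))]
      have hpos : ∑ s ∈ A, (β ^ ((τ s : Fin L) : ℕ) - β ^ (s : ℕ)) * u s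
          ≤ ∑ s ∈ A, (β ^ ((τ s : Fin L) : ℕ) - β ^ (s : ℕ)) := by
        apply Finset.sum_le_sum
        intro s hs
        rw [hA, mem_filter] at hs
        have := (hu s).2
        nlinarith [hs.2, (hu s).1]
      have hneg : ∑ s ∈ univ.filter (fun s => ¬ (0 ≤ β ^ ((τ s : Fin L) : ℕ) - β ^ (s : ℕ))),
          (β ^ ((τ s : Fin L) : ℕ) - β ^ (s : ℕ)) * u s ≤ 0 := by
        apply Finset.sum_nonpos
        intro s hs
        rw [mem_filter, not_le] at hs
        have := (hu s).1
        nlinarith [hs.2]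
      rw [hA]
      linarith
    -- split into two sums and map them to ℕ-index sets
    set k := A.card with hk
    have hkL : k ≤ L := by
      have := Finset.card_le_card (Finset.subset_univ A)
      simpa using this
    have split : ∑ s ∈ A, (β ^ ((τ s : Fin L) : ℕ) - β ^ (s : ℕ))
        = ∑ s ∈ A, β ^ ((τ s : Fin L) : ℕ) - ∑ s ∈ A, β ^ (s : ℕ) :=
      Finset.sum_sub_distrib _ _
    -- top bound
    set B1 : Finset ℕ := (A.image τ).image Fin.val with hB1
    have hB1sum : ∑ s ∈ A, β ^ ((τ s : Fin L) : ℕ) = ∑ j ∈ B1, β ^ j := by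
      rw [hB1, Finset.sum_image (fun a _ b _ h => Fin.val_injective h),
        Finset.sum_image (fun a _ b _ h => τ.injective h)]
    have hB1card : B1.card = k := by
      rw [hB1, Finset.card_image_of_injective _ Fin.val_injective,
        Finset.card_image_of_injective _ τ.injective]
    have hB1sub : B1 ⊆ range L := by
      intro j hj
      rw [hB1] at hj
      obtain ⟨s, _, rfl⟩ := Finset.mem_image.mp hj
      exact mem_range.mpr s.isLt
    have htop : ∑ s ∈ A, β ^ ((τ s : Fin L) : ℕ) ≤ ∑ j ∈ range k, β ^ j := by
      rw [hB1sum, ← hB1card]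
      exact geom_top_bound hβ0 hβ1 B1 hB1sub
    -- bottom bound
    set B2 : Finset ℕ := A.image Fin.val with hB2
    have hB2sum : ∑ s ∈ A, β ^ (s : ℕ) = ∑ j ∈ B2, β ^ j := by
      rw [hB2, Finset.sum_image (fun a _ b _ h => Fin.val_injective h)]
    have hB2card : B2.card = k := by
      rw [hB2, Finset.card_image_of_injective _ Fin.val_injective]
    have hB2sub : B2 ⊆ range L := by
      intro j hj
      rw [hB2] at hj
      obtain ⟨s, _, rfl⟩ := Finset.mem_image.mp hj
      exact mem_range.mpr s.isLt
    have hbot : ∑ j ∈ Ico (L - k) L, β ^ j ≤ ∑ s ∈ A, β ^ (s : ℕ) := by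
      rw [hB2sum, ← hB2card]
      exact geom_bot_bound hβ0 hβ1 B2 hB2sub
    -- evaluate geometric sums
    have hβne : β ≠ 1 := ne_of_lt hβ1
    have hgeom1 : ∑ j ∈ range k, β ^ j = (1 - β ^ k) / (1 - β) := by
      rw [geom_sum_eq hβne]
      rw [div_eq_div_iff (by linarith) (by linarith)]
      ring
    have hgeom2 : ∑ j ∈ Ico (L - k) L, β ^ j = (β ^ (L - k) - β ^ L) / (1 - β) := by
      rw [geom_sum_Ico' hβne (by omega : L - k ≤ L)]
    have hfinal : (1 - β ^ k) / (1 - β) - (β ^ (L - k) - β ^ L) / (1 - β)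
        ≤ (1 - β ^ L) ^ 2 / (1 - β) := by
      rw [div_sub_div_same]
      apply div_le_div_of_nonneg_right ?_ (by linarith)
      · have h1 : β ^ L ≤ β ^ k := pow_le_pow_of_le_one hβ0.le hβ1.le hkL
        have h2 : β ^ L ≤ β ^ (L - k) := pow_le_pow_of_le_one hβ0.le hβ1.le (by omega)
        have hkk : β ^ (L - k) * β ^ k = β ^ L := by
          rw [← pow_add]; congr 1; omega
        nlinarith [pow_nonneg hβ0.le L, pow_nonneg hβ0.le k, pow_nonneg hβ0.le (L-k)]
    have calcres : ∑ s ∈ A, (β ^ ((τ s : Fin L) : ℕ) - β ^ (s : ℕ))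
        ≤ (1 - β ^ L) ^ 2 / (1 - β) := by
      calc ∑ s ∈ A, (β ^ ((τ s : Fin L) : ℕ) - β ^ (s : ℕ))
          = ∑ s ∈ A, β ^ ((τ s : Fin L) : ℕ) - ∑ s ∈ A, β ^ (s : ℕ) := split
        _ ≤ ∑ j ∈ range k, β ^ j - ∑ j ∈ Ico (L - k) L, β ^ j := by linarith
        _ = (1 - β ^ k) / (1 - β) - (β ^ (L - k) - β ^ L) / (1 - β) := by
            rw [hgeom1, hgeom2]
        _ ≤ (1 - β ^ L) ^ 2 / (1 - β) := hfinal
    linarith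
  have expand : ∑ s : Fin L, β ^ ((τ s : Fin L) : ℕ) * u s
      = ∑ s : Fin L, β ^ (s : ℕ) * u s
        + ∑ s : Fin L, (β ^ ((τ s : Fin L) : ℕ) - β ^ (s : ℕ)) * u s := by
    rw [← Finset.sum_add_distrib]
    apply Finset.sum_congr rfl
    intro s _
    ring
  rw [expand]
  linarith
end

section
/- Let β ∈ (0,1), L a positive even integer, and v : Fin L → ℝ with values in [a, b] where a ≤ b and b − a ≤ 1. Then max_σ ∑_{t=0}^{L-1} β^t v(σ(t)) − min_σ ∑_{t=0}^{L-1} β^t v(σ(t)) ≤ (1 − β^{L/2})^2/(1 − β), where σ ranges over permutations of Fin L. -/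
/-- For even `L`, the gap between the maximal and minimal (over permutations)
discounted sums of values in `[a,b]` with `b − a ≤ 1` is at most
`(1 − β^{L/2})²/(1 − β)`. -/
theorem perm_discounted_sum_max_sub_min (β a b : ℝ) (hβ : β ∈ Set.Ioo (0:ℝ) 1)
    (L : ℕ) (hL : 0 < L) (hLeven : Even L)
    (v : Fin L → ℝ) (hv : ∀ t, v t ∈ Set.Icc a b) (hab : a ≤ b) (hba : b - a ≤ 1) :
    (Finset.univ.sup' Finset.univ_nonempty
        (fun σ : Equiv.Perm (Fin L) => ∑ t : Fin L, β ^ (t : ℕ) * v (σ t)))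
      - (Finset.univ.inf' Finset.univ_nonempty
        (fun σ : Equiv.Perm (Fin L) => ∑ t : Fin L, β ^ (t : ℕ) * v (σ t)))
      ≤ (1 - β ^ (L / 2)) ^ 2 / (1 - β) := by
  obtain ⟨hβ0, hβ1⟩ := hβ
  set m := L / 2 with hm
  obtain ⟨k, hk⟩ := hLeven
  have hmk : m = k := by omega
  have hL2 : L = m + m := by omega
  have hβne : β ≠ 1 := ne_of_lt hβ1
  have key : ∀ σ τ : Equiv.Perm (Fin L),
      (∑ t : Fin L, β ^ (t : ℕ) * v (σ t)) - (∑ t : Fin L, β ^ (t : ℕ) * v (τ t))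
        ≤ (1 - β ^ m) ^ 2 / (1 - β) := by
    intro σ τ
    have hsum : ∑ t : Fin L, v (σ t) = ∑ t : Fin L, v (τ t) := by
      rw [Equiv.sum_comp σ v, Equiv.sum_comp τ v]
    have expand : (∑ t : Fin L, β ^ (t : ℕ) * v (σ t)) - (∑ t : Fin L, β ^ (t : ℕ) * v (τ t))
        = ∑ t : Fin L, (β ^ (t : ℕ) - β ^ m) * (v (σ t) - v (τ t)) := by
      simp only [sub_mul, mul_sub]
      rw [Finset.sum_sub_distrib, Finset.sum_sub_distrib, Finset.sum_sub_distrib,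
        ← Finset.mul_sum, ← Finset.mul_sum, hsum]
      ring
    rw [expand]
    have hbound : ∀ t : Fin L,
        (β ^ (t : ℕ) - β ^ m) * (v (σ t) - v (τ t)) ≤ |β ^ (t : ℕ) - β ^ m| := by
      intro t
      calc (β ^ (t : ℕ) - β ^ m) * (v (σ t) - v (τ t))
          ≤ |(β ^ (t : ℕ) - β ^ m) * (v (σ t) - v (τ t))| := le_abs_self _
        _ = |β ^ (t : ℕ) - β ^ m| * |v (σ t) - v (τ t)| := abs_mul _ _
        _ ≤ |β ^ (t : ℕ) - β ^ m| * 1 := by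
            apply mul_le_mul_of_nonneg_left _ (abs_nonneg _)
            rw [abs_sub_le_iff]
            have h1 := hv (σ t); have h2 := hv (τ t)
            exact ⟨by linarith [h1.2, h2.1], by linarith [h1.1, h2.2]⟩
        _ = _ := mul_one _
    have hsum2 : ∑ t : Fin L, |β ^ (t : ℕ) - β ^ m| = (1 - β ^ m) ^ 2 / (1 - β) := by
      rw [Fin.sum_univ_eq_sum_range (fun t => |β ^ t - β ^ m|) L, hL2,
        Finset.sum_range_add]
      have e1 : ∀ i ∈ Finset.range m, |β ^ i - β ^ m| = β ^ i - β ^ m := by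
        intro i hi
        rw [Finset.mem_range] at hi
        exact abs_of_nonneg (sub_nonneg.mpr
          (pow_le_pow_of_le_one (le_of_lt hβ0) (le_of_lt hβ1) (le_of_lt hi)))
      have e2 : ∀ i ∈ Finset.range m, |β ^ (m + i) - β ^ m| = β ^ m - β ^ (m + i) := by
        intro i hi
        rw [abs_of_nonpos (sub_nonpos.mpr
          (pow_le_pow_of_le_one (le_of_lt hβ0) (le_of_lt hβ1) (Nat.le_add_right m i))),
          neg_sub]
      rw [Finset.sum_congr rfl e1, Finset.sum_congr rfl e2, ← Finset.sum_add_distrib]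
      have : ∀ i ∈ Finset.range m, (β ^ i - β ^ m) + (β ^ m - β ^ (m + i))
          = (1 - β ^ m) * β ^ i := by
        intro i _
        rw [pow_add]
        ring
      rw [Finset.sum_congr rfl this, ← Finset.mul_sum, geom_sum_eq hβne]
      rw [show (β ^ m - 1) / (β - 1) = (1 - β ^ m) / (1 - β) by
        rw [← neg_sub (β ^ m), ← neg_sub β, neg_div_neg_eq], sq, mul_div_assoc]
    calc ∑ t : Fin L, (β ^ (t : ℕ) - β ^ m) * (v (σ t) - v (τ t))
        ≤ ∑ t : Fin L, |β ^ (t : ℕ) - β ^ m| :=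
          Finset.sum_le_sum fun t _ => hbound t
      _ = (1 - β ^ m) ^ 2 / (1 - β) := hsum2
  rw [sub_le_iff_le_add]
  apply Finset.sup'_le
  intro σ _
  have hinf : (∑ t : Fin L, β ^ (t : ℕ) * v (σ t)) - (1 - β ^ m) ^ 2 / (1 - β)
      ≤ Finset.univ.inf' Finset.univ_nonempty
        (fun σ : Equiv.Perm (Fin L) => ∑ t : Fin L, β ^ (t : ℕ) * v (σ t)) := by
    apply Finset.le_inf'
    intro τ _
    linarith [key σ τ]
  linarith
end

section
/- Fix β ∈ (0,1), a finite set of players with utilities bounded in [0,1], a target payoff v^i achieved by a product mixed profile w_v, and a stopping time τ. Suppose a player i plays a (history-dependent) strategy s^i whose prescribed mixed action at every history is within ℓ¹ distance ε of w_v^i, while opponents follow the test-then-punish strategy: they play w_v^{−i} up to time τ and a Nash punishment b^{−i} with u^i(b) ≤ v^i afterwards. Then the discounted payoff satisfies U^i(s^i, s^{−i}_v) ≤ v^i + ε, where U^i = (1−β)∑_{t≥0} β^t E[u^i at time t]. -/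
open MeasureTheory

/-- Small-deviation payoff bound: if player `i`'s (history-dependent, random) mixed
action at every round is within ℓ¹ distance `ε` of the cooperative mixed action
`wA`, and opponents play `wB` up to the stopping time `τ` and then a punishment
with payoff `ubar ≤ v`, the discounted payoff is at most `v + ε`. -/
theorem small_deviation_payoff_le {Ω : Type*} [MeasurableSpace Ω]
    (μ : Measure Ω) [IsProbabilityMeasure μ]
    {A B : Type*} [Fintype A] [Fintype B]
    (β ε : ℝ) (hβ : β ∈ Set.Ioo (0:ℝ) 1) (hε : 0 < ε)
    (u : A → B → ℝ) (hu : ∀ a c, u a c ∈ Set.Icc (0:ℝ) 1)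
    (wA : A → ℝ) (hwA : (∀ a, 0 ≤ wA a) ∧ ∑ a, wA a = 1)
    (wB : B → ℝ) (hwB : (∀ c, 0 ≤ wB c) ∧ ∑ c, wB c = 1)
    (v : ℝ) (hv : v = ∑ a, ∑ c, u a c * wA a * wB c)
    (ubar : ℝ) (hubar : ubar ≤ v)
    (τ : Ω → ℕ)
    (s : ℕ → Ω → A → ℝ)
    (hs : ∀ t ω, (∀ a, 0 ≤ s t ω a) ∧ ∑ a, s t ω a = 1)
    (hclose : ∀ t ω, ∑ a, |s t ω a - wA a| ≤ ε) :
    (1 - β) * ∑' t : ℕ, β ^ t *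
        ∫ ω, (if t ≤ τ ω then ∑ a, ∑ c, u a c * s t ω a * wB c else ubar) ∂μ
      ≤ v + ε := by
  obtain ⟨hβ0, hβ1⟩ := hβ
  -- ζ a = expected payoff of action a against wB, in [0,1]
  set ζ : A → ℝ := fun a => ∑ c, u a c * wB c with hζ
  have hζ0 : ∀ a, 0 ≤ ζ a := fun a =>
    Finset.sum_nonneg fun c _ => mul_nonneg (hu a c).1 (hwB.1 c)
  have hζ1 : ∀ a, ζ a ≤ 1 := by
    intro a
    calc ζ a ≤ ∑ c, wB c := Finset.sum_le_sum fun c _ => by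
          have := (hu a c).2
          nlinarith [hwB.1 c]
      _ = 1 := hwB.2
  have hvζ : v = ∑ a, wA a * ζ a := by
    rw [hv]
    refine Finset.sum_congr rfl fun a _ => ?_
    rw [hζ, Finset.mul_sum]
    exact Finset.sum_congr rfl fun c _ => by ring
  have hv0 : 0 ≤ v := by
    rw [hvζ]; exact Finset.sum_nonneg fun a _ => mul_nonneg (hwA.1 a) (hζ0 a)
  -- pointwise bound on the payoff term
  have hpay : ∀ t ω, ∑ a, ∑ c, u a c * s t ω a * wB c ≤ v + ε := by
    intro t ω
    have h1 : ∑ a, ∑ c, u a c * s t ω a * wB c = ∑ a, s t ω a * ζ a := by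
      refine Finset.sum_congr rfl fun a _ => ?_
      rw [hζ, Finset.mul_sum]
      exact Finset.sum_congr rfl fun c _ => by ring
    have h2 : ∑ a, s t ω a * ζ a - v = ∑ a, (s t ω a - wA a) * ζ a := by
      rw [hvζ, ← Finset.sum_sub_distrib]
      exact Finset.sum_congr rfl fun a _ => by ring
    have h3 : ∑ a, (s t ω a - wA a) * ζ a ≤ ∑ a, |s t ω a - wA a| := by
      refine Finset.sum_le_sum fun a _ => ?_
      calc (s t ω a - wA a) * ζ a ≤ |s t ω a - wA a| * ζ a :=
            mul_le_mul_of_nonneg_right (le_abs_self _) (hζ0 a)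
        _ ≤ |s t ω a - wA a| * 1 :=
            mul_le_mul_of_nonneg_left (hζ1 a) (abs_nonneg _)
        _ = |s t ω a - wA a| := mul_one _
    have := le_trans h3 (hclose t ω)
    linarith [h1, h2]
  -- pointwise nonneg/bound of payoff term
  have hpay0 : ∀ t ω, 0 ≤ ∑ a, ∑ c, u a c * s t ω a * wB c := fun t ω =>
    Finset.sum_nonneg fun a _ => Finset.sum_nonneg fun c _ =>
      mul_nonneg (mul_nonneg (hu a c).1 ((hs t ω).1 a)) (hwB.1 c)
  set C : ℝ := max (v + ε) |ubar| with hC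
  have hC0 : 0 ≤ C := le_trans (by positivity) (le_max_left _ _)
  -- bound each integral by v + ε and in absolute value by C
  have hint : ∀ t : ℕ,
      (∫ ω, (if t ≤ τ ω then ∑ a, ∑ c, u a c * s t ω a * wB c else ubar) ∂μ) ≤ v + ε ∧
      |∫ ω, (if t ≤ τ ω then ∑ a, ∑ c, u a c * s t ω a * wB c else ubar) ∂μ| ≤ C := by
    intro t
    set f : Ω → ℝ :=
      fun ω => (if t ≤ τ ω then ∑ a, ∑ c, u a c * s t ω a * wB c else ubar) with hf
    have hfub : ∀ ω, f ω ≤ v + ε := by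
      intro ω; by_cases h : t ≤ τ ω
      · simp only [hf, if_pos h]; exact hpay t ω
      · simp only [hf, if_neg h]; linarith
    have hfC : ∀ ω, |f ω| ≤ C := by
      intro ω; by_cases h : t ≤ τ ω
      · simp only [hf, if_pos h]
        rw [abs_of_nonneg (hpay0 t ω)]
        exact le_trans (hpay t ω) (le_max_left _ _)
      · simp only [hf, if_neg h]; exact le_max_right _ _
    by_cases hI : Integrable f μ
    · constructor
      · calc ∫ ω, f ω ∂μ ≤ ∫ _ω, (v + ε) ∂μ :=
              integral_mono hI (integrable_const _) hfub
          _ = v + ε := by simp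
      · calc |∫ ω, f ω ∂μ| = ‖∫ ω, f ω ∂μ‖ := rfl
          _ ≤ C * (μ Set.univ).toReal :=
              norm_integral_le_of_norm_le_const (Filter.Eventually.of_forall hfC)
          _ = C := by simp
    · rw [integral_undef hI]
      constructor
      · positivity
      · simpa using hC0
  -- summability and tsum comparison
  have hsum_geo : Summable (fun t : ℕ => β ^ t) :=
    summable_geometric_of_lt_one hβ0.le hβ1
  have hsummable : Summable (fun t : ℕ => β ^ t *
      ∫ ω, (if t ≤ τ ω then ∑ a, ∑ c, u a c * s t ω a * wB c else ubar) ∂μ) := by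
    apply Summable.of_abs
    apply Summable.of_nonneg_of_le (fun t => abs_nonneg _)
      (fun t => ?_) (hsum_geo.mul_right C)
    rw [abs_mul, abs_pow, abs_of_pos hβ0]
    exact mul_le_mul_of_nonneg_left (hint t).2 (by positivity)
  have htsum : (∑' t : ℕ, β ^ t *
      ∫ ω, (if t ≤ τ ω then ∑ a, ∑ c, u a c * s t ω a * wB c else ubar) ∂μ)
      ≤ ∑' t : ℕ, β ^ t * (v + ε) := by
    refine Summable.tsum_le_tsum (fun t => ?_) hsummable (hsum_geo.mul_right _)
    exact mul_le_mul_of_nonneg_left (hint t).1 (by positivity)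
  have hgeo : (∑' t : ℕ, β ^ t * (v + ε)) = (1 - β)⁻¹ * (v + ε) := by
    rw [tsum_mul_right, tsum_geometric_of_lt_one hβ0.le hβ1]
  have h1β : 0 < 1 - β := by linarith
  calc (1 - β) * ∑' t : ℕ, β ^ t *
        ∫ ω, (if t ≤ τ ω then ∑ a, ∑ c, u a c * s t ω a * wB c else ubar) ∂μ
      ≤ (1 - β) * ((1 - β)⁻¹ * (v + ε)) := by
        apply mul_le_mul_of_nonneg_left _ h1β.le
        rw [← hgeo]; exact htsum
    _ = v + ε := by field_simp
end
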